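/- arXiv:2104.13707 — 2 statements merged into one kernel-verified Lean document; each statement's English description precedes it below -/
import Mathlib

section
/- For positive definite Hermitian matrices Φ₀, Φ₁ and positive definite Hermitian weight Ω, the matrix U_Ω := Φ₁^{-1/2} Ω^{-1} Φ₀^{-1/2} (Φ₀^{1/2} Ω Φ₁ Ω Φ₀^{1/2})^{1/2} satisfies U_Ω U_Ω* = I. -/
/-! Write `M = Φ₁^{1/2} Ω Φ₀^{1/2}` and `S = (Φ₀^{1/2} Ω Φ₁ Ω Φ₀^{1/2})^{1/2}`. All factors are
Hermitian, so `S² = Mᴴ M` and `U_Ω = (Mᴴ)⁻¹ S`; hence `U_Ω U_Ωᴴ = (Mᴴ)⁻¹ Mᴴ M M⁻¹ = 1`.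
Equivalently, `M = U_Ω S` is the polar decomposition of `M`. -/

open Matrix
open scoped ComplexOrder

/-- The positive semidefinite square root of a positive semidefinite matrix
(the definition `Matrix.PosSemidef.sqrt` of Mathlib, Dec 2024, since removed). -/
noncomputable def Matrix.PosSemidef.sqrt {n 𝕜 : Type*} [Fintype n] [DecidableEq n] [RCLike 𝕜]
    {A : Matrix n n 𝕜} (hA : A.PosSemidef) : Matrix n n 𝕜 :=
  hA.1.eigenvectorUnitary.1 * diagonal ((↑) ∘ (√·) ∘ hA.1.eigenvalues) *
  (star hA.1.eigenvectorUnitary : Matrix n n 𝕜)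

namespace Matrix

variable {n : Type*} [Fintype n] [DecidableEq n]

theorem conjTranspose_inv_mul_mul_conjTranspose_eq_one {R : Type*} [CommRing R] [StarRing R]
    {M S : Matrix n n R} (hM : IsUnit M) (hS : Sᴴ = S) (hSS : S * S = Mᴴ * M) :
    (Mᴴ⁻¹ * S) * (Mᴴ⁻¹ * S)ᴴ = 1 := by
  have hMdet : IsUnit M.det := (isUnit_iff_isUnit_det M).1 hM
  have hMHdet : IsUnit Mᴴ.det := (isUnit_iff_isUnit_det _).1 hM.star
  calc (Mᴴ⁻¹ * S) * (Mᴴ⁻¹ * S)ᴴ = Mᴴ⁻¹ * (S * S) * M⁻¹ := by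
        rw [conjTranspose_mul, hS, conjTranspose_nonsing_inv, conjTranspose_conjTranspose,
          Matrix.mul_assoc, Matrix.mul_assoc, Matrix.mul_assoc]
    _ = (Mᴴ⁻¹ * Mᴴ) * (M * M⁻¹) := by rw [hSS]; simp only [Matrix.mul_assoc]
    _ = 1 := by rw [nonsing_inv_mul _ hMHdet, mul_nonsing_inv _ hMdet, Matrix.mul_one]

theorem inv_mul_inv_mul_inv_mul_mul_conjTranspose_eq_one {R : Type*} [CommRing R] [StarRing R]
    {A B W S : Matrix n n R} (hA : Aᴴ = A) (hB : Bᴴ = B) (hW : Wᴴ = W) (hBWA : IsUnit (B * W * A))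
    (hS : Sᴴ = S) (hSS : S * S = A * W * (B * B) * W * A) :
    (B⁻¹ * W⁻¹ * A⁻¹ * S) * (B⁻¹ * W⁻¹ * A⁻¹ * S)ᴴ = 1 := by
  have hMH : (B * W * A)ᴴ = A * W * B := by
    rw [conjTranspose_mul, conjTranspose_mul, hA, hB, hW, Matrix.mul_assoc]
  have hInv : B⁻¹ * W⁻¹ * A⁻¹ = (B * W * A)ᴴ⁻¹ := by
    rw [hMH, Matrix.mul_inv_rev, Matrix.mul_inv_rev, Matrix.mul_assoc]
  rw [hInv]
  refine conjTranspose_inv_mul_mul_conjTranspose_eq_one hBWA hS ?_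
  rw [hSS, hMH]
  simp only [Matrix.mul_assoc]

namespace PosSemidef

variable {𝕜 : Type*} [RCLike 𝕜] {A : Matrix n n 𝕜}

theorem posSemidef_sqrt (hA : A.PosSemidef) : hA.sqrt.PosSemidef := by
  have hD : (diagonal ((↑) ∘ (√·) ∘ hA.1.eigenvalues) : Matrix n n 𝕜).PosSemidef :=
    posSemidef_diagonal_iff.2 fun i => RCLike.ofReal_nonneg.2 (Real.sqrt_nonneg _)
  exact hD.mul_mul_conjTranspose_same hA.1.eigenvectorUnitary.1

theorem sqrt_mul_self (hA : A.PosSemidef) : hA.sqrt * hA.sqrt = A := by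
  set U : Matrix n n 𝕜 := hA.1.eigenvectorUnitary.1
  have hUU : star U * U = 1 := Unitary.coe_star_mul_self hA.1.eigenvectorUnitary
  have hD : (diagonal ((↑) ∘ (√·) ∘ hA.1.eigenvalues) : Matrix n n 𝕜) *
      diagonal ((↑) ∘ (√·) ∘ hA.1.eigenvalues) = diagonal (RCLike.ofReal ∘ hA.1.eigenvalues) := by
    rw [diagonal_mul_diagonal]
    congr 1
    funext i
    simp only [Function.comp_apply]
    rw [← RCLike.ofReal_mul, Real.mul_self_sqrt (hA.eigenvalues_nonneg i)]
  conv_rhs => rw [hA.1.spectral_theorem, Unitary.conjStarAlgAut_apply]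
  simp only [sqrt, Matrix.mul_assoc]
  rw [← Matrix.mul_assoc (star U) U, hUU, Matrix.one_mul, ← Matrix.mul_assoc (diagonal _), hD]

theorem isUnit_sqrt (hA : A.PosSemidef) (hAu : IsUnit A) : IsUnit hA.sqrt := by
  refine (isUnit_iff_isUnit_det _).2 (isUnit_of_mul_isUnit_left (y := hA.sqrt.det) ?_)
  rw [← det_mul, hA.sqrt_mul_self]
  exact (isUnit_iff_isUnit_det A).1 hAu

end PosSemidef

end Matrix

theorem weighted_allpass_unitary (n : ℕ)
    (Φ₀ Φ₁ Ω : Matrix (Fin n) (Fin n) ℂ)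
    (h0 : Φ₀.PosDef) (h1 : Φ₁.PosDef) (hΩ : Ω.PosDef)
    (hS : (h0.posSemidef.sqrt * Ω * Φ₁ * Ω * h0.posSemidef.sqrt).PosSemidef) :
    (h1.posSemidef.sqrt⁻¹ * Ω⁻¹ * h0.posSemidef.sqrt⁻¹ * hS.sqrt) *
      (h1.posSemidef.sqrt⁻¹ * Ω⁻¹ * h0.posSemidef.sqrt⁻¹ * hS.sqrt)ᴴ = 1 := by
  have hM : IsUnit (h1.posSemidef.sqrt * Ω * h0.posSemidef.sqrt) :=
    ((h1.posSemidef.isUnit_sqrt h1.isUnit).mul hΩ.isUnit).mul (h0.posSemidef.isUnit_sqrt h0.isUnit)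
  refine inv_mul_inv_mul_inv_mul_mul_conjTranspose_eq_one h0.posSemidef.posSemidef_sqrt.1
    h1.posSemidef.posSemidef_sqrt.1 hΩ.1 hM hS.posSemidef_sqrt.1 ?_
  rw [hS.sqrt_mul_self, h1.posSemidef.sqrt_mul_self]
end

section
/- For positive semidefinite Hermitian matrices A, B and a complex matrix C such that the block matrix [[A, C],[C*, B]] is positive semidefinite, one has Re(tr C) ≤ tr((B^{1/2} A B^{1/2})^{1/2}). -/
open Matrix
open scoped ComplexOrder

/-!
Positivity of the block matrix gives, for all `X` and `Y`,
`2 Re tr (Xᴴ C Y) ≤ tr (Xᴴ A X) + tr (Yᴴ B Y)`. Write `T = B^{1/2}`, `T⁺` for its pseudo-inverse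
and `M = T A T`, and take `X = T F`, `Y = T⁺ G` with `F = (M + δ)^{-1/4}`, `G = (M + δ)^{1/4}`.
Because `ker B ⊆ ker C`, we have `C T⁺ T = C`, so the cross term is `tr C`; the other two terms
are `∑ μ / √(μ + δ)` and at most `∑ √(μ + δ)` over the eigenvalues `μ` of `M`, hence at most
`2 tr M^{1/2} + n √δ`. Let `δ → 0`.
-/

open Filter Topology

lemma Real.div_sqrt_add_add_sqrt_add_le {μ δ : ℝ} (hμ : 0 ≤ μ) (hδ : 0 ≤ δ) :
    μ / √(μ + δ) + √(μ + δ) ≤ 2 * √μ + √δ := by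
  have h₁ : μ / √(μ + δ) ≤ √μ := by
    rcases hμ.eq_or_lt with rfl | hμ
    · simp
    calc μ / √(μ + δ) ≤ μ / √μ := by gcongr; linarith
      _ = √μ := Real.div_sqrt
  have h₂ : √(μ + δ) ≤ √μ + √δ := by
    rw [Real.sqrt_le_left (by positivity)]
    nlinarith [Real.sq_sqrt hμ, Real.sq_sqrt hδ,
      mul_nonneg (Real.sqrt_nonneg μ) (Real.sqrt_nonneg δ)]
  linarith

namespace Matrix

variable {m n k 𝕜 : Type*} [Fintype m] [Fintype n] [RCLike 𝕜]

namespace IsHermitian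

variable [DecidableEq n] {H : Matrix n n 𝕜}

lemma cfc_mul_cfc (hH : H.IsHermitian) (f g : ℝ → ℝ) :
    hH.cfc f * hH.cfc g = hH.cfc (fun x => f x * g x) := by
  simp only [← hH.cfc_eq]
  exact (cfc_mul f g H (H.finite_real_spectrum.continuousOn _)
    (H.finite_real_spectrum.continuousOn _)).symm

lemma cfc_sub_cfc (hH : H.IsHermitian) (f g : ℝ → ℝ) :
    hH.cfc f - hH.cfc g = hH.cfc (fun x => f x - g x) := by
  simp only [← hH.cfc_eq]
  exact (cfc_sub f g H (H.finite_real_spectrum.continuousOn _)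
    (H.finite_real_spectrum.continuousOn _)).symm

lemma cfc_congr_eigenvalues (hH : H.IsHermitian) {f g : ℝ → ℝ}
    (h : ∀ i, f (hH.eigenvalues i) = g (hH.eigenvalues i)) : hH.cfc f = hH.cfc g := by
  simp only [← hH.cfc_eq]
  refine cfc_congr ?_
  rw [hH.spectrum_real_eq_range_eigenvalues]
  rintro _ ⟨i, rfl⟩
  exact h i

lemma cfc_id' (hH : H.IsHermitian) : hH.cfc (fun x => x) = H := by
  rw [← hH.cfc_eq]
  exact _root_.cfc_id' ℝ H

lemma cfc_const_one (hH : H.IsHermitian) : hH.cfc (fun _ => 1) = 1 := by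
  rw [← hH.cfc_eq]
  exact _root_.cfc_const_one ℝ H

lemma isHermitian_cfc (hH : H.IsHermitian) (f : ℝ → ℝ) : (hH.cfc f).IsHermitian := by
  rw [← hH.cfc_eq]
  exact cfc_predicate f H

open scoped MatrixOrder in
lemma posSemidef_cfc (hH : H.IsHermitian) {f : ℝ → ℝ} (hf : ∀ i, 0 ≤ f (hH.eigenvalues i)) :
    (hH.cfc f).PosSemidef := by
  rw [← hH.cfc_eq, ← nonneg_iff_posSemidef]
  refine cfc_nonneg fun x hx => ?_
  rw [hH.spectrum_real_eq_range_eigenvalues] at hx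
  obtain ⟨i, rfl⟩ := hx
  exact hf i

lemma re_trace_cfc (hH : H.IsHermitian) (f : ℝ → ℝ) :
    RCLike.re (hH.cfc f).trace = ∑ i, f (hH.eigenvalues i) := by
  rw [IsHermitian.cfc, Unitary.conjStarAlgAut_apply, trace_mul_cycle, Unitary.coe_star_mul_self,
    one_mul, trace_diagonal]
  simp

end IsHermitian

namespace PosSemidef

section FromBlocks

variable {A : Matrix m m 𝕜} {B : Matrix n n 𝕜} {C : Matrix m n 𝕜}

lemma mulVec_eq_zero_of_fromBlocks (hK : (fromBlocks A C Cᴴ B).PosSemidef) {v : n → 𝕜}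
    (hv : B *ᵥ v = 0) : C *ᵥ v = 0 := by
  have hKv : fromBlocks A C Cᴴ B *ᵥ Sum.elim 0 v = 0 :=
    (hK.dotProduct_mulVec_zero_iff _).mp
      (by simp [fromBlocks_mulVec, hv, Function.star_sumElim])
  ext i
  simpa [fromBlocks_mulVec] using congrFun hKv (Sum.inl i)

lemma mul_eq_zero_of_fromBlocks (hK : (fromBlocks A C Cᴴ B).PosSemidef) {W : Matrix n k 𝕜}
    (hW : B * W = 0) : C * W = 0 := by
  ext i j
  have hv : B *ᵥ (fun l => W l j) = 0 := funext fun l => congrFun (congrFun hW l) j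
  exact congrFun (hK.mulVec_eq_zero_of_fromBlocks hv) i

lemma two_mul_re_trace_le_of_fromBlocks [Fintype k] (hK : (fromBlocks A C Cᴴ B).PosSemidef)
    (X : Matrix m k 𝕜) (Y : Matrix n k 𝕜) :
    2 * RCLike.re (Xᴴ * C * Y).trace ≤
      RCLike.re (Xᴴ * A * X).trace + RCLike.re (Yᴴ * B * Y).trace := by
  have h := (RCLike.nonneg_iff.mp
    (hK.conjTranspose_mul_mul_same (fromRows X (-Y))).trace_nonneg).1
  have hconj : (Yᴴ * Cᴴ * X).trace = star (Xᴴ * C * Y).trace := by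
    rw [← trace_conjTranspose]
    simp [conjTranspose_mul, Matrix.mul_assoc]
  rw [conjTranspose_fromRows_eq_fromCols_conjTranspose, Matrix.mul_assoc,
    fromBlocks_mul_fromRows, fromCols_mul_fromRows] at h
  simp only [Matrix.mul_add, Matrix.mul_neg, Matrix.neg_mul, conjTranspose_neg, neg_neg,
    trace_add, trace_neg, map_add, map_neg, ← Matrix.mul_assoc, hconj, RCLike.star_def,
    RCLike.conj_re] at h
  linarith

end FromBlocks

variable [DecidableEq n] {B : Matrix n n 𝕜}

lemma re_trace_conjTranspose_mul_mul_le [Fintype k] {P : Matrix n n 𝕜}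
    (hP : (1 - P).PosSemidef) (G : Matrix n k 𝕜) :
    RCLike.re (Gᴴ * P * G).trace ≤ RCLike.re (Gᴴ * G).trace := by
  have h := (RCLike.nonneg_iff.mp (hP.conjTranspose_mul_mul_same G).trace_nonneg).1
  rw [Matrix.mul_sub, Matrix.sub_mul, Matrix.mul_one, trace_sub, map_sub] at h
  linarith

lemma sqrt_eq_cfc (hB : B.PosSemidef) : hB.sqrt = hB.1.cfc Real.sqrt := rfl

/-- The Moore–Penrose pseudo-inverse of `hB.sqrt`: `0⁻¹ = 0` on the kernel of `B`. -/
noncomputable def pinvSqrt (hB : B.PosSemidef) : Matrix n n 𝕜 :=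
  hB.1.cfc fun x => (√x)⁻¹

lemma isHermitian_sqrt (hB : B.PosSemidef) : hB.sqrt.IsHermitian :=
  hB.1.isHermitian_cfc _

lemma isHermitian_pinvSqrt (hB : B.PosSemidef) : hB.pinvSqrt.IsHermitian :=
  hB.1.isHermitian_cfc _

lemma sqrt_mul_sqrt_self (hB : B.PosSemidef) : hB.sqrt * hB.sqrt = B := by
  rw [sqrt_eq_cfc, IsHermitian.cfc_mul_cfc]
  exact (hB.1.cfc_congr_eigenvalues fun i => Real.mul_self_sqrt (hB.eigenvalues_nonneg i)).trans
    hB.1.cfc_id'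

lemma sqrt_mul_pinvSqrt_mul_sqrt (hB : B.PosSemidef) :
    hB.sqrt * hB.pinvSqrt * hB.sqrt = hB.sqrt := by
  rw [sqrt_eq_cfc, pinvSqrt, IsHermitian.cfc_mul_cfc, IsHermitian.cfc_mul_cfc]
  simp only [mul_inv_mul_cancel]

lemma posSemidef_one_sub_pinvSqrt_mul_mul_pinvSqrt (hB : B.PosSemidef) :
    (1 - hB.pinvSqrt * B * hB.pinvSqrt).PosSemidef := by
  have h : 1 - hB.pinvSqrt * B * hB.pinvSqrt = hB.1.cfc fun x => 1 - (√x)⁻¹ * x * (√x)⁻¹ := by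
    rw [← IsHermitian.cfc_sub_cfc, ← IsHermitian.cfc_mul_cfc, ← IsHermitian.cfc_mul_cfc,
      hB.1.cfc_const_one]
    exact congrArg (fun X => 1 - hB.pinvSqrt * X * hB.pinvSqrt) hB.1.cfc_id'.symm
  rw [h]
  refine hB.1.posSemidef_cfc fun i => ?_
  rcases (hB.eigenvalues_nonneg i).eq_or_lt with h | h
  · simp [← h]
  · have : (√(hB.1.eigenvalues i))⁻¹ * hB.1.eigenvalues i * (√(hB.1.eigenvalues i))⁻¹ = 1 := by
      field_simp
      exact (Real.sq_sqrt h.le).symm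
    simp [this]

lemma mul_pinvSqrt_mul_sqrt_of_fromBlocks {A : Matrix m m 𝕜} {C : Matrix m n 𝕜}
    (hB : B.PosSemidef) (hK : (fromBlocks A C Cᴴ B).PosSemidef) :
    C * (hB.pinvSqrt * hB.sqrt) = C := by
  have hker : B * (1 - hB.pinvSqrt * hB.sqrt) = 0 := by
    calc B * (1 - hB.pinvSqrt * hB.sqrt)
        = hB.sqrt * hB.sqrt * (1 - hB.pinvSqrt * hB.sqrt) := by rw [hB.sqrt_mul_sqrt_self]
      _ = 0 := by
        rw [Matrix.mul_sub, Matrix.mul_one, Matrix.mul_assoc hB.sqrt hB.sqrt,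
          ← Matrix.mul_assoc hB.sqrt hB.pinvSqrt, hB.sqrt_mul_pinvSqrt_mul_sqrt, sub_self]
  have h := hK.mul_eq_zero_of_fromBlocks hker
  rw [Matrix.mul_sub, Matrix.mul_one, sub_eq_zero] at h
  exact h.symm

lemma two_mul_re_trace_le_of_fromBlocks_of_mul_eq_one {A C : Matrix n n 𝕜}
    (hB : B.PosSemidef) (hK : (fromBlocks A C Cᴴ B).PosSemidef) {F G : Matrix n n 𝕜}
    (hGF : G * Fᴴ = 1) :
    2 * RCLike.re C.trace ≤
      RCLike.re (Fᴴ * (hB.sqrt * A * hB.sqrt) * F).trace + RCLike.re (Gᴴ * G).trace := by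
  have hT := hB.isHermitian_sqrt.eq
  have hCXY : ((hB.sqrt * F)ᴴ * C * (hB.pinvSqrt * G)).trace = C.trace :=
    calc _ = (Fᴴ * (hB.sqrt * C * hB.pinvSqrt * G)).trace := by
          simp only [conjTranspose_mul, hT, Matrix.mul_assoc]
      _ = (hB.sqrt * (C * hB.pinvSqrt)).trace := by
          rw [trace_mul_comm, Matrix.mul_assoc _ G, hGF, Matrix.mul_one, Matrix.mul_assoc]
      _ = C.trace := by
          rw [trace_mul_comm, Matrix.mul_assoc, hB.mul_pinvSqrt_mul_sqrt_of_fromBlocks hK]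
  have hAX : (hB.sqrt * F)ᴴ * A * (hB.sqrt * F) = Fᴴ * (hB.sqrt * A * hB.sqrt) * F := by
    simp only [conjTranspose_mul, hT, Matrix.mul_assoc]
  have hBY : (hB.pinvSqrt * G)ᴴ * B * (hB.pinvSqrt * G) =
      Gᴴ * (hB.pinvSqrt * B * hB.pinvSqrt) * G := by
    simp only [conjTranspose_mul, hB.isHermitian_pinvSqrt.eq, Matrix.mul_assoc]
  have key := hK.two_mul_re_trace_le_of_fromBlocks (hB.sqrt * F) (hB.pinvSqrt * G)
  rw [hCXY, hAX, hBY] at key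
  linarith [re_trace_conjTranspose_mul_mul_le hB.posSemidef_one_sub_pinvSqrt_mul_mul_pinvSqrt G]

lemma exists_mul_conjTranspose_eq_one_re_trace_le {M : Matrix n n 𝕜} (hM : M.PosSemidef)
    {δ : ℝ} (hδ : 0 < δ) :
    ∃ F G : Matrix n n 𝕜, G * Fᴴ = 1 ∧
      RCLike.re (Fᴴ * M * F).trace + RCLike.re (Gᴴ * G).trace ≤
        2 * RCLike.re hM.sqrt.trace + Fintype.card n * √δ := by
  set q : ℝ → ℝ := fun x => √(√(x + δ))
  have hq_pos : ∀ i, 0 < q (hM.1.eigenvalues i) := fun i => by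
    have := hM.eigenvalues_nonneg i
    positivity
  have hq_mul_self : ∀ x, q x * q x = √(x + δ) := fun x => Real.mul_self_sqrt (Real.sqrt_nonneg _)
  refine ⟨hM.1.cfc fun x => (q x)⁻¹, hM.1.cfc q, ?_, ?_⟩
  · rw [(hM.1.isHermitian_cfc _).eq, IsHermitian.cfc_mul_cfc, ← hM.1.cfc_const_one]
    exact hM.1.cfc_congr_eigenvalues fun i => mul_inv_cancel₀ (hq_pos i).ne'
  have hF : (hM.1.cfc fun x => (q x)⁻¹)ᴴ * M * (hM.1.cfc fun x => (q x)⁻¹) =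
      hM.1.cfc fun x => x / √(x + δ) := by
    calc _ = (hM.1.cfc fun x => (q x)⁻¹) * hM.1.cfc (fun x => x) *
          (hM.1.cfc fun x => (q x)⁻¹) := by rw [(hM.1.isHermitian_cfc _).eq, hM.1.cfc_id']
      _ = _ := by
        rw [IsHermitian.cfc_mul_cfc, IsHermitian.cfc_mul_cfc]
        congr! 2 with x
        rw [mul_comm, ← mul_assoc, ← mul_inv, hq_mul_self, ← div_eq_inv_mul]
  have hG : (hM.1.cfc q)ᴴ * hM.1.cfc q = hM.1.cfc fun x => √(x + δ) := by
    rw [(hM.1.isHermitian_cfc _).eq, IsHermitian.cfc_mul_cfc]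
    simp only [hq_mul_self]
  rw [hF, hG, sqrt_eq_cfc, IsHermitian.re_trace_cfc, IsHermitian.re_trace_cfc,
    IsHermitian.re_trace_cfc, ← Finset.sum_add_distrib]
  calc _ ≤ ∑ i, (2 * √(hM.1.eigenvalues i) + √δ) := Finset.sum_le_sum fun i _ =>
        Real.div_sqrt_add_add_sqrt_add_le (hM.eigenvalues_nonneg i) hδ.le
    _ = _ := by simp [Finset.sum_add_distrib, Finset.mul_sum]

end PosSemidef

end Matrix

theorem cross_trace_bound_general (n : ℕ)
    (A B C : Matrix (Fin n) (Fin n) ℂ) (hB : B.PosSemidef)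
    (hS : (hB.sqrt * A * hB.sqrt).PosSemidef)
    (hblock : (Matrix.fromBlocks A C Cᴴ B).PosSemidef) :
    C.trace.re ≤ hS.sqrt.trace.re := by
  have hlim : Tendsto (fun δ : ℝ => 2 * hS.sqrt.trace.re + n * √δ) (𝓝[>] 0)
      (𝓝 (2 * hS.sqrt.trace.re)) := by
    refine Tendsto.mono_left ?_ nhdsWithin_le_nhds
    simpa using (continuous_const.add (continuous_const.mul Real.continuous_sqrt)).tendsto
      (f := fun δ : ℝ => 2 * hS.sqrt.trace.re + n * √δ) 0
  have h := ge_of_tendsto hlim <| eventually_nhdsWithin_of_forall fun δ (hδ : 0 < δ) => by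
    obtain ⟨F, G, hGF, hle⟩ := hS.exists_mul_conjTranspose_eq_one_re_trace_le hδ
    have := hB.two_mul_re_trace_le_of_fromBlocks_of_mul_eq_one hblock hGF
    simp only [Fintype.card_fin] at hle
    exact this.trans hle
  exact le_of_mul_le_mul_left h two_pos

theorem cross_trace_bound (n : ℕ)
    (A B C : Matrix (Fin n) (Fin n) ℂ) (hA : A.PosSemidef) (hB : B.PosSemidef)
    (hS : (hB.sqrt * A * hB.sqrt).PosSemidef)
    (hblock : (Matrix.fromBlocks A C Cᴴ B).PosSemidef) :
    C.trace.re ≤ hS.sqrt.trace.re :=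
  cross_trace_bound_general n A B C hB hS hblock
end
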